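/- Optimal tree-MSB coupling is the product of edge couplings divided by vertex powers: for a tree T = (V, E) with strictly positive marginals and edge-additive Gibbs kernel, the optimal coupling satisfies (M*_T)_{i₁,...,i_s} = [ Π_{(σ₁,σ₂)∈E} (M*_{σ₁σ₂})_{i_{σ₁}, i_{σ₂}} ] / [ Π_{σ=1}^{s} μ_σ(i_σ)^{deg(σ)-1} ], where M*_{σ₁σ₂} is the optimal bimarginal Schrödinger bridge coupling on edge (σ₁,σ₂). -/

import Mathlib

/-!
Each optimal edge bridge `M_e` is strictly positive (moving mass onto a zero entry has slope
`log 0⁺ = -∞`) and of Gibbs form `K_e(x, y) e^{f_e(x) + g_e(y)}` (first-order conditions along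
the directions `(δ_x - δ_x') ⊗ (δ_y - δ_y')`). Removing leaves one at a time shows that
`N = ∏_σ μ_σ · ∏_e M_e / (μ_{e₁} μ_{e₂})` has marginals `μ`, the leaf coordinate being
independent of the rest before its edge is attached. Then `log (N / K)` is a sum of
one-coordinate functions, so `∑ P log (N / K)` takes the same value on every coupling `P`:
`KL(P ‖ K) = KL(P ‖ N) + const`, and by Gibbs' inequality the optimal coupling is `N`.
-/

open Finset Real Filter Topology Function InformationTheory

section RelEntropy

variable {ι : Type*} [Fintype ι]

noncomputable def relEntropy (m q : ι → ℝ) : ℝ := ∑ j, m j * log (m j / q j)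

theorem mul_log_div (p : ℝ) {q : ℝ} (hq : q ≠ 0) : p * log (p / q) = p * log p - p * log q := by
  rcases eq_or_ne p 0 with rfl | hp
  · simp
  rw [log_div hp hq, mul_sub]

theorem mul_log_div_eq_add {p n k : ℝ} (hn : n ≠ 0) (hk : k ≠ 0) :
    p * log (p / k) = p * log (p / n) + p * log (n / k) := by
  rcases eq_or_ne p 0 with rfl | hp
  · simp
  rw [← mul_add, ← log_mul (div_ne_zero hp hn) (div_ne_zero hn hk), div_mul_div_cancel₀ hn]

theorem relEntropy_eq_add {m n k : ι → ℝ} (hn : ∀ j, n j ≠ 0) (hk : ∀ j, k j ≠ 0) :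
    relEntropy m k = relEntropy m n + ∑ j, m j * log (n j / k j) := by
  rw [relEntropy, relEntropy, ← sum_add_distrib]
  exact sum_congr rfl fun j _ => mul_log_div_eq_add (hn j) (hk j)

theorem eq_of_relEntropy_nonpos {m n : ι → ℝ} (hm : ∀ j, 0 ≤ m j) (hn : ∀ j, 0 < n j)
    (hsum : ∑ j, m j = ∑ j, n j) (h : relEntropy m n ≤ 0) : m = n := by
  have hkl : ∀ j, m j * log (m j / n j) = n j * klFun (m j / n j) + (m j - n j) := by
    intro j
    rw [klFun]
    field_simp [(hn j).ne']
    ring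
  have hnonneg : ∀ j ∈ univ, 0 ≤ n j * klFun (m j / n j) := fun j _ =>
    mul_nonneg (hn j).le (klFun_nonneg (div_nonneg (hm j) (hn j).le))
  have hzero : ∑ j, n j * klFun (m j / n j) = 0 := by
    refine le_antisymm ?_ (sum_nonneg hnonneg)
    simpa [relEntropy, hkl, sum_add_distrib, sum_sub_distrib, hsum] using h
  funext j
  have := (sum_eq_zero_iff_of_nonneg hnonneg).1 hzero j (mem_univ j)
  rw [mul_eq_zero, klFun_eq_zero_iff (div_nonneg (hm j) (hn j).le),
    div_eq_one_iff_eq (hn j).ne'] at this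
  exact this.resolve_left (hn j).ne'

theorem eq_of_relEntropy_le {m n k : ι → ℝ} (hm : ∀ j, 0 ≤ m j) (hn : ∀ j, 0 < n j)
    (hk : ∀ j, 0 < k j) (hsum : ∑ j, m j = ∑ j, n j)
    (hcross : ∑ j, m j * log (n j / k j) = ∑ j, n j * log (n j / k j))
    (hle : relEntropy m k ≤ relEntropy n k) : m = n := by
  have hself : relEntropy n n = 0 := by simp [relEntropy, div_self (hn _).ne']
  refine eq_of_relEntropy_nonpos hm hn hsum ?_
  have hk' : ∀ j, k j ≠ 0 := fun j => (hk j).ne'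
  have hn' : ∀ j, n j ≠ 0 := fun j => (hn j).ne'
  rw [relEntropy_eq_add hn' hk', relEntropy_eq_add hn' hk' (m := n), hself, hcross] at hle
  linarith

theorem mul_log_div_segment_le {x y q t : ℝ} (hx : 0 ≤ x) (hy : 0 ≤ y) (hq : 0 < q)
    (ht₀ : 0 ≤ t) (ht₁ : t ≤ 1) :
    ((1 - t) * x + t * y) * log (((1 - t) * x + t * y) / q)
      ≤ (1 - t) * (x * log (x / q)) + t * (y * log (y / q)) := by
  have hconv := convexOn_mul_log.2 (Set.mem_Ici.2 hx) (Set.mem_Ici.2 hy) (sub_nonneg.2 ht₁) ht₀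
    (by ring)
  simp only [smul_eq_mul] at hconv
  rw [mul_log_div _ hq.ne', mul_log_div _ hq.ne', mul_log_div _ hq.ne']
  linarith [show ((1 - t) * x + t * y) * log q = (1 - t) * (x * log q) + t * (y * log q) by ring]

theorem hasDerivAt_mul_log_div {x q : ℝ} (hx : 0 < x) (hq : 0 < q) :
    HasDerivAt (fun x => x * log (x / q)) (log (x / q) + 1) x := by
  refine ((hasDerivAt_id' x).fun_mul
    (((hasDerivAt_id' x).div_const q).log (div_pos hx hq).ne')).congr_deriv ?_
  field_simp

theorem pos_of_relEntropy_le_segment {m P q : ι → ℝ} (hm : ∀ j, 0 ≤ m j) (hP : ∀ j, 0 < P j)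
    (hq : ∀ j, 0 < q j)
    (hmin : ∀ t ∈ Set.Ioo (0 : ℝ) 1,
      relEntropy m q ≤ relEntropy (fun j => (1 - t) * m j + t * P j) q) :
    ∀ j, 0 < m j := by
  classical
  by_contra! ⟨j₀, hj₀⟩
  have hmj₀ : m j₀ = 0 := le_antisymm hj₀ (hm j₀)
  have hseg : ∀ t ∈ Set.Ioo (0 : ℝ) 1, relEntropy (fun j => (1 - t) * m j + t * P j) q
      ≤ (1 - t) * relEntropy m q + t * relEntropy P q + t * P j₀ * log t := by
    intro t ⟨ht₀, ht₁⟩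
    have hentry : ∀ j, ((1 - t) * m j + t * P j) * log (((1 - t) * m j + t * P j) / q j)
        ≤ (1 - t) * (m j * log (m j / q j)) + t * (P j * log (P j / q j))
          + if j = j₀ then t * P j₀ * log t else 0 := by
      intro j
      split_ifs with h
      · subst h
        rw [hmj₀, mul_zero, zero_add, zero_mul, mul_zero, zero_add, mul_div_assoc,
          log_mul ht₀.ne' (div_pos (hP j) (hq j)).ne', log_div (hP j).ne' (hq j).ne']
        linarith
      · linarith [mul_log_div_segment_le (hm j) (hP j).le (hq j) ht₀.le ht₁.le]
    calc relEntropy (fun j => (1 - t) * m j + t * P j) q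
        ≤ ∑ j, ((1 - t) * (m j * log (m j / q j)) + t * (P j * log (P j / q j))
          + if j = j₀ then t * P j₀ * log t else 0) := sum_le_sum fun j _ => hentry j
      _ = _ := by
        simp only [sum_add_distrib, ← mul_sum, sum_ite_eq',
          mem_univ, if_true, relEntropy]
  have hbound : ∀ t ∈ Set.Ioo (0 : ℝ) 1,
      0 ≤ relEntropy P q - relEntropy m q + P j₀ * log t := by
    intro t ht
    have h := (hmin t ht).trans (hseg t ht)
    have h' : 0 ≤ t * (relEntropy P q - relEntropy m q + P j₀ * log t) := by linarith
    exact (mul_nonneg_iff_of_pos_left ht.1).1 h'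
  have hsmall : ∀ᶠ t in 𝓝[>] (0 : ℝ), t ∈ Set.Ioo 0 1 := Ioo_mem_nhdsGT one_pos
  obtain ⟨t, ht, hlog⟩ := (hsmall.and (tendsto_log_nhdsGT_zero.eventually
    (eventually_lt_atBot (-(relEntropy P q - relEntropy m q) / P j₀)))).exists
  have := hbound t ht
  rw [lt_div_iff₀ (hP j₀)] at hlog
  linarith

theorem sum_mul_log_div_eq_zero_of_isLocalMin {m q d : ι → ℝ} (hm : ∀ j, 0 < m j)
    (hq : ∀ j, 0 < q j) (hd : ∑ j, d j = 0)
    (hmin : IsLocalMin (fun t => relEntropy (fun j => m j + t * d j) q) 0) :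
    ∑ j, d j * log (m j / q j) = 0 := by
  have hderiv : HasDerivAt (fun t => relEntropy (fun j => m j + t * d j) q)
      (∑ j, (log (m j / q j) + 1) * d j) 0 := by
    refine HasDerivAt.fun_sum fun j _ => ?_
    have hlin : HasDerivAt (fun t => m j + t * d j) (d j) 0 := by
      simpa using ((hasDerivAt_id (0 : ℝ)).mul_const (d j)).const_add (m j)
    exact (hasDerivAt_mul_log_div (by simpa using hm j) (hq j)).comp_of_eq 0 hlin (by simp)
  have h := hmin.hasDerivAt_eq_zero hderiv
  simp only [add_mul, one_mul, sum_add_distrib, hd, add_zero] at h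
  rw [← h]
  exact sum_congr rfl fun j _ => mul_comm _ _

end RelEntropy

theorem exists_add_of_add_eq_add {α β : Type*} {r : α → β → ℝ}
    (h : ∀ x x' y y', r x y + r x' y' = r x y' + r x' y) :
    ∃ (f : α → ℝ) (g : β → ℝ), ∀ x y, r x y = f x + g y := by
  rcases isEmpty_or_nonempty α with _ | ⟨⟨x₀⟩⟩
  · exact ⟨0, 0, fun x => isEmptyElim x⟩
  rcases isEmpty_or_nonempty β with _ | ⟨⟨y₀⟩⟩
  · exact ⟨0, 0, fun _ y => isEmptyElim y⟩
  exact ⟨fun x => r x y₀ - r x₀ y₀, fun y => r x₀ y, fun x y => by linarith [h x x₀ y y₀]⟩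

section Transport

variable {α β : Type*} [Fintype α] [Fintype β]

noncomputable def sbCost (q m : α → β → ℝ) : ℝ := ∑ x, ∑ y, m x y * log (m x y / q x y)

theorem relEntropy_uncurry (q m : α → β → ℝ) :
    relEntropy (uncurry m) (uncurry q) = sbCost q m :=
  Fintype.sum_prod_type' fun x y => m x y * log (m x y / q x y)

def IsTransportPlan (μ₁ : α → ℝ) (μ₂ : β → ℝ) (m : α → β → ℝ) : Prop :=
  (∀ x y, 0 ≤ m x y) ∧ (∀ x, ∑ y, m x y = μ₁ x) ∧ (∀ y, ∑ x, m x y = μ₂ y)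

variable {μ₁ : α → ℝ} {μ₂ : β → ℝ} {q m : α → β → ℝ}

theorem IsTransportPlan.segment {n : α → β → ℝ} (hm : IsTransportPlan μ₁ μ₂ m)
    (hn : IsTransportPlan μ₁ μ₂ n) {t : ℝ} (ht₀ : 0 ≤ t) (ht₁ : t ≤ 1) :
    IsTransportPlan μ₁ μ₂ fun x y => (1 - t) * m x y + t * n x y := by
  obtain ⟨hm₀, hm₁, hm₂⟩ := hm
  obtain ⟨hn₀, hn₁, hn₂⟩ := hn
  refine ⟨fun x y => ?_, fun x => ?_, fun y => ?_⟩
  · exact add_nonneg (mul_nonneg (sub_nonneg.2 ht₁) (hm₀ x y)) (mul_nonneg ht₀ (hn₀ x y))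
  · simp only [sum_add_distrib, ← mul_sum, hm₁, hn₁]; ring
  · simp only [sum_add_distrib, ← mul_sum, hm₂, hn₂]; ring

theorem isTransportPlan_mul (hμ₁ : ∀ x, 0 ≤ μ₁ x) (hμ₂ : ∀ y, 0 ≤ μ₂ y) (h₁ : ∑ x, μ₁ x = 1)
    (h₂ : ∑ y, μ₂ y = 1) : IsTransportPlan μ₁ μ₂ fun x y => μ₁ x * μ₂ y :=
  ⟨fun x y => mul_nonneg (hμ₁ x) (hμ₂ y), fun x => by rw [← mul_sum, h₂, mul_one],
    fun y => by rw [← sum_mul, h₁, one_mul]⟩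

theorem IsTransportPlan.eventually_add_mul_mul (hpos : ∀ x y, 0 < m x y)
    (hm : IsTransportPlan μ₁ μ₂ m) {u : α → ℝ} {v : β → ℝ} (hu : ∑ x, u x = 0) (hv : ∑ y, v y = 0) :
    ∀ᶠ t in 𝓝 (0 : ℝ), IsTransportPlan μ₁ μ₂ fun x y => m x y + t * (u x * v y) := by
  have hnonneg : ∀ᶠ t in 𝓝 (0 : ℝ), ∀ x y, 0 < m x y + t * (u x * v y) :=
    eventually_all.2 fun x => eventually_all.2 fun y =>
      continuousAt_const.eventually_lt (by fun_prop) (by simpa using hpos x y)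
  filter_upwards [hnonneg] with t ht
  refine ⟨fun x y => (ht x y).le, fun x => ?_, fun y => ?_⟩
  · simp only [sum_add_distrib, ← mul_sum, hm.2.1, hv, mul_zero, add_zero]
  · simp only [sum_add_distrib, ← sum_mul, ← mul_sum, hm.2.2, hu, zero_mul, mul_zero, add_zero]

theorem IsTransportPlan.pos_of_isMinOn (hμ₁ : ∀ x, 0 < μ₁ x) (hμ₂ : ∀ y, 0 < μ₂ y)
    (h₁ : ∑ x, μ₁ x = 1) (h₂ : ∑ y, μ₂ y = 1) (hq : ∀ x y, 0 < q x y)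
    (hm : IsTransportPlan μ₁ μ₂ m) (hmin : IsMinOn (sbCost q) {n | IsTransportPlan μ₁ μ₂ n} m) :
    ∀ x y, 0 < m x y := by
  have hprod := isTransportPlan_mul (fun x => (hμ₁ x).le) (fun y => (hμ₂ y).le) h₁ h₂
  have h := pos_of_relEntropy_le_segment (m := uncurry m) (q := uncurry q)
    (P := uncurry fun x y => μ₁ x * μ₂ y) (fun p => hm.1 p.1 p.2)
    (fun p => mul_pos (hμ₁ p.1) (hμ₂ p.2)) (fun p => hq p.1 p.2) fun t ht => by
      have := isMinOn_iff.1 hmin _ (hm.segment hprod ht.1.le ht.2.le)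
      rwa [← relEntropy_uncurry, ← relEntropy_uncurry] at this
  exact fun x y => h (x, y)

theorem IsTransportPlan.exists_potentials_of_isMinOn (hμ₁ : ∀ x, 0 < μ₁ x)
    (hμ₂ : ∀ y, 0 < μ₂ y) (h₁ : ∑ x, μ₁ x = 1) (h₂ : ∑ y, μ₂ y = 1) (hq : ∀ x y, 0 < q x y)
    (hm : IsTransportPlan μ₁ μ₂ m) (hmin : IsMinOn (sbCost q) {n | IsTransportPlan μ₁ μ₂ n} m) :
    ∃ (f : α → ℝ) (g : β → ℝ), ∀ x y, m x y = q x y * exp (f x + g y) := by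
  classical
  have hpos := hm.pos_of_isMinOn hμ₁ hμ₂ h₁ h₂ hq hmin
  have hstat : ∀ (u : α → ℝ) (v : β → ℝ), ∑ x, u x = 0 → ∑ y, v y = 0 →
      ∑ x, ∑ y, u x * v y * log (m x y / q x y) = 0 := by
    intro u v hu hv
    have h := sum_mul_log_div_eq_zero_of_isLocalMin (m := uncurry m)
      (q := uncurry q) (d := uncurry fun x y => u x * v y)
      (fun p => hpos p.1 p.2) (fun p => hq p.1 p.2)
      (by simp [Fintype.sum_prod_type, ← mul_sum, hv]) ?_
    · simpa only [Fintype.sum_prod_type, uncurry_apply_pair] using h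
    · filter_upwards [hm.eventually_add_mul_mul hpos hu hv] with t ht
      have := isMinOn_iff.1 hmin _ ht
      rw [← relEntropy_uncurry, ← relEntropy_uncurry] at this
      simp only [zero_mul, add_zero]
      exact this
  have hcycle : ∀ x x' y y', log (m x y / q x y) + log (m x' y' / q x' y')
      = log (m x y' / q x y') + log (m x' y / q x' y) := by
    intro x x' y y'
    have h := hstat (fun a => (if a = x then 1 else 0) - if a = x' then 1 else 0)
      (fun b => (if b = y then 1 else 0) - if b = y' then 1 else 0) (by simp) (by simp)
    simp only [sub_mul, mul_sub, ite_mul, one_mul, zero_mul, mul_ite, mul_one, mul_zero,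
      sum_sub_distrib, sum_ite_eq', mem_univ, if_true] at h
    linarith
  obtain ⟨f, g, hfg⟩ := exists_add_of_add_eq_add hcycle
  refine ⟨f, g, fun x y => ?_⟩
  rw [← hfg, exp_log (div_pos (hpos x y) (hq x y)), mul_div_cancel₀ _ (hq x y).ne']

end Transport

section Marginals

variable {V : Type*} [Fintype V] [DecidableEq V] {α : V → Type*}

theorem prod_update_mul {M : Type*} [CommMonoid M] (f : ∀ σ, α σ → M) (i : ∀ σ, α σ) (u : V)
    (z : α u) : (∏ σ, f σ (update i u z σ)) * f u (i u) = (∏ σ, f σ (i σ)) * f u z := by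
  rw [← mul_prod_erase univ _ (mem_univ u), ← mul_prod_erase univ (fun σ => f σ (i σ)) (mem_univ u),
    update_self, prod_congr rfl fun σ hσ => by rw [update_of_ne (ne_of_mem_erase hσ)]]
  ac_rfl

variable [∀ σ, Fintype (α σ)]

theorem sum_sum_update (u : V) (G : (∀ σ, α σ) → α u → ℝ) :
    ∑ i, ∑ z, G (update i u z) (i u) = ∑ i, ∑ z, G i z := by
  let e : Equiv.Perm ((∀ σ, α σ) × α u) :=
    Involutive.toPerm (fun p : (∀ σ, α σ) × α u => (update p.1 u p.2, p.1 u)) fun p => by simp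
  simp only [← Fintype.sum_prod_type']
  exact Equiv.sum_comp e fun p => G p.1 p.2

/-- Under `N`, the coordinate `u` is independent of the others with law `w`, so it may be
resampled. -/
theorem sum_mul_eq_sum_mul_sum_update {u : V} {N : (∀ σ, α σ) → ℝ} {w : α u → ℝ}
    (hw : ∑ z, w z = 1) (hN : ∀ i z, N (update i u z) * w (i u) = N i * w z)
    (Φ : (∀ σ, α σ) → ℝ) :
    ∑ i, N i * Φ i = ∑ i, N i * ∑ z, w z * Φ (update i u z) := by
  calc ∑ i, N i * Φ i = ∑ i, ∑ z, N i * Φ i * w z := by simp [← mul_sum, hw]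
    _ = ∑ i, ∑ z, N (update i u z) * Φ (update i u z) * w (i u) :=
      (sum_sum_update u fun j z => N j * Φ j * w z).symm
    _ = ∑ i, N i * ∑ z, w z * Φ (update i u z) := by
      simp only [mul_sum]
      refine sum_congr rfl fun i _ => sum_congr rfl fun z _ => ?_
      rw [mul_right_comm, hN]
      ring

variable [∀ σ, DecidableEq (α σ)]

def HasMarginals (μ : ∀ σ, α σ → ℝ) (P : (∀ σ, α σ) → ℝ) : Prop :=
  ∀ σ r, ∑ i, (if i σ = r then P i else 0) = μ σ r

variable {μ : ∀ σ, α σ → ℝ} {P : (∀ σ, α σ) → ℝ}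

theorem hasMarginals_iff_sum_mul_ite :
    HasMarginals μ P ↔ ∀ σ r, ∑ i, P i * (if i σ = r then 1 else 0) = μ σ r := by
  simp only [HasMarginals, mul_ite, mul_one, mul_zero]

theorem HasMarginals.sum_mul_apply (h : HasMarginals μ P) (σ : V) (φ : α σ → ℝ) :
    ∑ i, P i * φ (i σ) = ∑ r, μ σ r * φ r := by
  simp_rw [← h σ, sum_mul, ite_mul, zero_mul]
  rw [sum_comm]
  simp

theorem HasMarginals.sum_eq (h : HasMarginals μ P) (σ : V) : ∑ i, P i = ∑ r, μ σ r := by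
  simpa using h.sum_mul_apply σ 1

theorem hasMarginals_prod (hμ1 : ∀ σ, ∑ r, μ σ r = 1) :
    HasMarginals μ fun i => ∏ σ, μ σ (i σ) := by
  rw [hasMarginals_iff_sum_mul_ite]
  intro σ r
  rw [sum_mul_eq_sum_mul_sum_update (hμ1 σ) (fun i z => prod_update_mul μ i σ z)]
  simp [mul_ite, ← sum_mul, ← Fintype.prod_sum, hμ1]

theorem HasMarginals.mul_leaf {N : (∀ σ, α σ) → ℝ} (hN : HasMarginals μ N)
    (hμ : ∀ σ r, 0 < μ σ r) {u p : V} (hup : u ≠ p) (hμ1 : ∑ z, μ u z = 1)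
    (hNu : ∀ i z, N (update i u z) * μ u (i u) = N i * μ u z) {W : α u → α p → ℝ}
    (hrow : ∀ z, ∑ w, W z w = μ u z) (hcol : ∀ w, ∑ z, W z w = μ p w) :
    HasMarginals μ fun i => N i * (W (i u) (i p) / (μ u (i u) * μ p (i p))) := by
  rw [hasMarginals_iff_sum_mul_ite]
  intro σ r
  simp_rw [mul_assoc]
  rw [sum_mul_eq_sum_mul_sum_update hμ1 hNu]
  have hcancel : ∀ (i : ∀ σ, α σ) z, μ u z * (W z (i p) / (μ u z * μ p (i p)))
      = W z (i p) / μ p (i p) := fun i z => by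
    field_simp [(hμ u z).ne']
  simp only [update_self, update_of_ne hup.symm, ← mul_assoc, hcancel]
  rcases eq_or_ne σ u with rfl | hσ
  · simp only [update_self, mul_ite, mul_one, mul_zero, sum_ite_eq', mem_univ, if_true]
    rw [hN.sum_mul_apply p fun w => W r w / μ p w, ← hrow r]
    exact sum_congr rfl fun w _ => mul_div_cancel₀ _ (hμ p w).ne'
  · simp only [update_of_ne hσ, ← sum_mul, ← sum_div, hcol, div_self (hμ p _).ne', one_mul]
    exact (hasMarginals_iff_sum_mul_ite.1 hN) σ r

end Marginals

theorem SimpleGraph.IsAcyclic.exists_existsUnique_adj {V : Type*} [Finite V] {G : SimpleGraph V}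
    (hG : G.IsAcyclic) {a b : V} (hab : G.Adj a b) : ∃ u, ∃! w, G.Adj u w := by
  have : Nonempty V := ⟨a⟩
  obtain ⟨u, v, p, hp, hmax⟩ := Walk.exists_isPath_forall_isPath_length_le_length G
  have hnil : ¬p.Nil := by
    have := hmax a b (Walk.cons hab .nil) (by simp [hab.ne])
    rw [← Walk.length_eq_zero_iff]
    simp at this
    omega
  refine ⟨u, p.snd, p.adj_snd hnil, fun w hw => hG.eq_snd_of_adj_start hp hw ?_⟩
  by_contra hw'
  have := hmax w v (p.cons hw.symm) (hp.cons hw')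
  simp at this

theorem one_le_card_filter_of_connected {V : Type*} [DecidableEq V] [Nontrivial V]
    {E : Finset (V × V)}
    (hconn : (SimpleGraph.fromRel fun a b => (a, b) ∈ E).Connected) (σ : V) :
    1 ≤ #(E.filter fun e => e.1 = σ ∨ e.2 = σ) := by
  obtain ⟨τ, hτ⟩ := hconn.preconnected.exists_adj_of_nontrivial σ
  rw [SimpleGraph.fromRel_adj] at hτ
  rcases hτ.2 with h | h
  · exact card_pos.2 ⟨_, mem_filter.2 ⟨h, Or.inl rfl⟩⟩
  · exact card_pos.2 ⟨_, mem_filter.2 ⟨h, Or.inr rfl⟩⟩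

section Tree

variable {V : Type*} [Fintype V] {E : Finset (V × V)} {α : V → Type*}

noncomputable def treeCoupling (μ : ∀ σ, α σ → ℝ) (W : ∀ σ₁ σ₂, α σ₁ → α σ₂ → ℝ)
    (E : Finset (V × V)) (i : ∀ σ, α σ) : ℝ :=
  (∏ σ, μ σ (i σ)) * ∏ e ∈ E, W e.1 e.2 (i e.1) (i e.2) / (μ e.1 (i e.1) * μ e.2 (i e.2))

variable {μ : ∀ σ, α σ → ℝ} {W : ∀ σ₁ σ₂, α σ₁ → α σ₂ → ℝ}

theorem log_treeCoupling_div {q : ∀ σ₁ σ₂, α σ₁ → α σ₂ → ℝ} (hμ : ∀ σ r, 0 < μ σ r)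
    (hq : ∀ σ₁ σ₂ x y, 0 < q σ₁ σ₂ x y) {f : ∀ e : V × V, α e.1 → ℝ}
    {g : ∀ e : V × V, α e.2 → ℝ}
    (hW : ∀ e ∈ E, ∀ x y, W e.1 e.2 x y = q e.1 e.2 x y * exp (f e x + g e y)) (i : ∀ σ, α σ) :
    log (treeCoupling μ W E i / ∏ e ∈ E, q e.1 e.2 (i e.1) (i e.2))
      = ∑ σ, log (μ σ (i σ)) + ∑ e ∈ E, ((f e (i e.1) - log (μ e.1 (i e.1)))
          + (g e (i e.2) - log (μ e.2 (i e.2)))) := by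
  have hedge : ∀ e ∈ E, W e.1 e.2 (i e.1) (i e.2) / (μ e.1 (i e.1) * μ e.2 (i e.2))
      = q e.1 e.2 (i e.1) (i e.2) * exp ((f e (i e.1) - log (μ e.1 (i e.1)))
          + (g e (i e.2) - log (μ e.2 (i e.2)))) := fun e he => by
    simp only [hW e he, exp_add, exp_sub, exp_log (hμ _ _)]
    ring
  have hvert : ∏ σ, μ σ (i σ) = exp (∑ σ, log (μ σ (i σ))) := by
    rw [exp_sum]
    exact prod_congr rfl fun σ _ => (exp_log (hμ σ _)).symm
  rw [treeCoupling, prod_congr rfl hedge, prod_mul_distrib, ← exp_sum, hvert, mul_left_comm,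
    ← exp_add, mul_div_cancel_left₀ _ (prod_ne_zero_iff.2 fun e _ => (hq _ _ _ _).ne'), log_exp]

variable [DecidableEq V]

theorem prod_mul_prod_eq_prod_pow_card {M : Type*} [CommMonoid M] (hloop : ∀ e ∈ E, e.1 ≠ e.2)
    (f : V → M) :
    ∏ e ∈ E, f e.1 * f e.2 = ∏ σ, f σ ^ #(E.filter fun e => e.1 = σ ∨ e.2 = σ) := by
  calc ∏ e ∈ E, f e.1 * f e.2
      = ∏ e ∈ E, ∏ σ, if e.1 = σ ∨ e.2 = σ then f σ else 1 := by
        refine prod_congr rfl fun e he => ?_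
        have hends : (univ.filter fun σ => e.1 = σ ∨ e.2 = σ) = {e.1, e.2} := by
          ext; simp [eq_comm]
        rw [← prod_filter, hends, prod_pair (hloop e he)]
    _ = ∏ σ, f σ ^ #(E.filter fun e => e.1 = σ ∨ e.2 = σ) := by
      rw [Finset.prod_comm]
      exact prod_congr rfl fun σ _ => by rw [← prod_filter, prod_const]

theorem exists_leaf_edge (hE : E.Nonempty) (hloop : ∀ e ∈ E, e.1 ≠ e.2)
    (horient : ∀ e ∈ E, (e.2, e.1) ∉ E)
    (hacyc : (SimpleGraph.fromRel fun a b => (a, b) ∈ E).IsAcyclic) :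
    ∃ e ∈ E, ∃ u p, u ≠ p ∧ (e = (u, p) ∨ e = (p, u)) ∧ ∀ e' ∈ E.erase e, e'.1 ≠ u ∧ e'.2 ≠ u := by
  obtain ⟨⟨a, b⟩, hab⟩ := hE
  have hadj : (SimpleGraph.fromRel fun a b => (a, b) ∈ E).Adj a b :=
    (SimpleGraph.fromRel_adj _ _ _).2 ⟨hloop _ hab, Or.inl hab⟩
  obtain ⟨u, p, hup, huniq⟩ := hacyc.exists_existsUnique_adj hadj
  simp only [SimpleGraph.fromRel_adj] at hup huniq
  have hinc : ∀ e' ∈ E, e'.1 = u ∨ e'.2 = u → e' = (u, p) ∨ e' = (p, u) := by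
    rintro ⟨a, b⟩ he' (rfl | rfl)
    · exact Or.inl (by rw [huniq b ⟨hloop _ he', Or.inl he'⟩])
    · exact Or.inr (by rw [huniq a ⟨(hloop _ he').symm, Or.inr he'⟩])
  obtain ⟨hup, he | he⟩ := hup
  · refine ⟨_, he, u, p, hup, Or.inl rfl, fun e' he' => not_or.1 fun h => ?_⟩
    obtain ⟨hne, he'⟩ := mem_erase.1 he'
    exact horient _ he (((hinc e' he' h).resolve_left hne) ▸ he')
  · refine ⟨_, he, u, p, hup, Or.inr rfl, fun e' he' => not_or.1 fun h => ?_⟩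
    obtain ⟨hne, he'⟩ := mem_erase.1 he'
    exact horient _ he (((hinc e' he' h).resolve_right hne) ▸ he')

theorem treeCoupling_update_mul {u : V} (hu : ∀ e ∈ E, e.1 ≠ u ∧ e.2 ≠ u) (i : ∀ σ, α σ)
    (z : α u) :
    treeCoupling μ W E (update i u z) * μ u (i u) = treeCoupling μ W E i * μ u z := by
  have hedges : ∏ e ∈ E, W e.1 e.2 (update i u z e.1) (update i u z e.2)
        / (μ e.1 (update i u z e.1) * μ e.2 (update i u z e.2))
      = ∏ e ∈ E, W e.1 e.2 (i e.1) (i e.2) / (μ e.1 (i e.1) * μ e.2 (i e.2)) :=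
    prod_congr rfl fun e he => by rw [update_of_ne (hu e he).1, update_of_ne (hu e he).2]
  rw [treeCoupling, treeCoupling, hedges, mul_right_comm, prod_update_mul, mul_right_comm]

theorem treeCoupling_eq_mul_erase {e : V × V} (he : e ∈ E) (i : ∀ σ, α σ) :
    treeCoupling μ W E i = treeCoupling μ W (E.erase e) i
      * (W e.1 e.2 (i e.1) (i e.2) / (μ e.1 (i e.1) * μ e.2 (i e.2))) := by
  rw [treeCoupling, treeCoupling, ← mul_prod_erase E _ he]
  ring

theorem treeCoupling_eq_div (hμ : ∀ σ r, μ σ r ≠ 0) (hloop : ∀ e ∈ E, e.1 ≠ e.2)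
    (hdeg : ∀ σ, 1 ≤ #(E.filter fun e => e.1 = σ ∨ e.2 = σ)) (i : ∀ σ, α σ) :
    treeCoupling μ W E i = (∏ e ∈ E, W e.1 e.2 (i e.1) (i e.2))
      / ∏ σ, μ σ (i σ) ^ (#(E.filter fun e => e.1 = σ ∨ e.2 = σ) - 1) := by
  have hpow : ∏ σ, μ σ (i σ) ^ #(E.filter fun e => e.1 = σ ∨ e.2 = σ)
      = (∏ σ, μ σ (i σ) ^ (#(E.filter fun e => e.1 = σ ∨ e.2 = σ) - 1)) * ∏ σ, μ σ (i σ) := by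
    rw [← prod_mul_distrib]
    exact prod_congr rfl fun σ _ => (pow_sub_one_mul (by have := hdeg σ; omega) _).symm
  have hne : ∏ σ, μ σ (i σ) ≠ 0 := prod_ne_zero_iff.2 fun σ _ => hμ σ _
  rw [treeCoupling, prod_div_distrib, prod_mul_prod_eq_prod_pow_card hloop fun σ => μ σ (i σ),
    hpow]
  field_simp

variable [∀ σ, Fintype (α σ)] [∀ σ, DecidableEq (α σ)]

theorem HasMarginals.sum_mul_vertex_add_edge {P : (∀ σ, α σ) → ℝ} (h : HasMarginals μ P)
    (a : ∀ σ, α σ → ℝ) (b : ∀ e : V × V, α e.1 → ℝ) (c : ∀ e : V × V, α e.2 → ℝ) :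
    ∑ i, P i * (∑ σ, a σ (i σ) + ∑ e ∈ E, (b e (i e.1) + c e (i e.2)))
      = ∑ σ, ∑ r, μ σ r * a σ r + ∑ e ∈ E, (∑ r, μ e.1 r * b e r + ∑ r, μ e.2 r * c e r) := by
  simp only [mul_add, mul_sum, sum_add_distrib]
  rw [sum_comm, sum_comm (s := univ) (t := E), sum_comm (s := univ) (t := E)]
  simp only [h.sum_mul_apply]

theorem hasMarginals_treeCoupling (hμ : ∀ σ r, 0 < μ σ r) (hμ1 : ∀ σ, ∑ r, μ σ r = 1)
    (hloop : ∀ e ∈ E, e.1 ≠ e.2) (horient : ∀ e ∈ E, (e.2, e.1) ∉ E)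
    (hacyc : (SimpleGraph.fromRel fun a b => (a, b) ∈ E).IsAcyclic)
    (hW : ∀ e ∈ E, (∀ x, ∑ y, W e.1 e.2 x y = μ e.1 x) ∧ ∀ y, ∑ x, W e.1 e.2 x y = μ e.2 y) :
    HasMarginals μ (treeCoupling μ W E) := by
  induction E using Finset.strongInduction with
  | H E ih =>
    rcases E.eq_empty_or_nonempty with rfl | hE
    · convert hasMarginals_prod hμ1 using 2
      simp [treeCoupling]
    obtain ⟨e, he, u, p, hup, hep, hleaf⟩ := exists_leaf_edge hE hloop horient hacyc
    have hsub : (SimpleGraph.fromRel fun a b => (a, b) ∈ E.erase e)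
        ≤ SimpleGraph.fromRel fun a b => (a, b) ∈ E := fun a b hab => by
      simp only [SimpleGraph.fromRel_adj] at hab ⊢
      exact ⟨hab.1, hab.2.imp mem_of_mem_erase mem_of_mem_erase⟩
    have hN := ih _ (erase_ssubset he) (fun e' he' => hloop e' (mem_of_mem_erase he'))
      (fun e' he' h => horient e' (mem_of_mem_erase he') (mem_of_mem_erase h)) (hacyc.anti hsub)
      (fun e' he' => hW e' (mem_of_mem_erase he'))
    have hNu := treeCoupling_update_mul (μ := μ) (W := W) hleaf
    rcases hep with rfl | rfl
    · convert hN.mul_leaf hμ hup (hμ1 u) hNu (hW _ he).1 (hW _ he).2 using 1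
      exact funext (treeCoupling_eq_mul_erase he)
    · convert hN.mul_leaf hμ hup (hμ1 u) hNu (W := fun z w => W p u w z) (hW _ he).2 (hW _ he).1
        using 1
      funext i
      rw [treeCoupling_eq_mul_erase he, mul_comm (μ p (i p))]

theorem eq_treeCoupling_of_isMinOn [Nonempty V] {q : ∀ σ₁ σ₂, α σ₁ → α σ₂ → ℝ}
    {f : ∀ e : V × V, α e.1 → ℝ} {g : ∀ e : V × V, α e.2 → ℝ} {M : (∀ σ, α σ) → ℝ}
    (hμ : ∀ σ r, 0 < μ σ r) (hμ1 : ∀ σ, ∑ r, μ σ r = 1)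
    (hloop : ∀ e ∈ E, e.1 ≠ e.2) (horient : ∀ e ∈ E, (e.2, e.1) ∉ E)
    (hacyc : (SimpleGraph.fromRel fun a b => (a, b) ∈ E).IsAcyclic)
    (hq : ∀ σ₁ σ₂ x y, 0 < q σ₁ σ₂ x y)
    (hWq : ∀ e ∈ E, ∀ x y, W e.1 e.2 x y = q e.1 e.2 x y * exp (f e x + g e y))
    (hW : ∀ e ∈ E, (∀ x, ∑ y, W e.1 e.2 x y = μ e.1 x) ∧ ∀ y, ∑ x, W e.1 e.2 x y = μ e.2 y)
    (hM0 : ∀ i, 0 ≤ M i) (hM : HasMarginals μ M)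
    (hmin : IsMinOn (relEntropy · fun i => ∏ e ∈ E, q e.1 e.2 (i e.1) (i e.2))
      {N | (∀ i, 0 ≤ N i) ∧ HasMarginals μ N} M) :
    M = treeCoupling μ W E := by
  obtain ⟨σ₀⟩ := ‹Nonempty V›
  have hN := hasMarginals_treeCoupling hμ hμ1 hloop horient hacyc hW
  have hNpos : ∀ i, 0 < treeCoupling μ W E i := fun i =>
    mul_pos (prod_pos fun σ _ => hμ σ _) (prod_pos fun e he => div_pos
      (by rw [hWq e he]; exact mul_pos (hq _ _ _ _) (exp_pos _)) (mul_pos (hμ _ _) (hμ _ _)))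
  refine eq_of_relEntropy_le hM0 hNpos (fun i => prod_pos fun e _ => hq _ _ _ _)
    (by rw [hM.sum_eq σ₀, hN.sum_eq σ₀]) ?_ (isMinOn_iff.1 hmin _ ⟨fun i => (hNpos i).le, hN⟩)
  have hsep := fun (P : (∀ σ, α σ) → ℝ) (hP : HasMarginals μ P) =>
    hP.sum_mul_vertex_add_edge (E := E) (fun σ r => log (μ σ r))
      (fun e r => f e r - log (μ e.1 r)) (fun e r => g e r - log (μ e.2 r))
  simp only [log_treeCoupling_div hμ hq hWq]
  exact (hsep M hM).trans (hsep _ hN).symm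

end Tree

theorem tree_msb_coupling_product_formula_general
    (s : ℕ) (hs : 2 ≤ s) (n : Fin s → ℕ)
    (μ : (σ : Fin s) → Fin (n σ) → ℝ)
    (hμpos : ∀ σ r, 0 < μ σ r) (hμ1 : ∀ σ, ∑ r, μ σ r = 1)
    (E : Finset (Fin s × Fin s))
    (hloop : ∀ e ∈ E, e.1 ≠ e.2) (horient : ∀ e ∈ E, (e.2, e.1) ∉ E)
    (htree : (SimpleGraph.fromRel (fun a b => (a, b) ∈ E)).Connected ∧
             (SimpleGraph.fromRel (fun a b => (a, b) ∈ E)).IsAcyclic)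
    (C : (σ₁ σ₂ : Fin s) → Fin (n σ₁) → Fin (n σ₂) → ℝ) (η : ℝ)
    (Msb : (σ₁ σ₂ : Fin s) → Fin (n σ₁) → Fin (n σ₂) → ℝ)
    (hMsbmem : ∀ e ∈ E, (∀ x y, 0 ≤ Msb e.1 e.2 x y) ∧
      (∀ x, ∑ y, Msb e.1 e.2 x y = μ e.1 x) ∧
      (∀ y, ∑ x, Msb e.1 e.2 x y = μ e.2 y))
    (hMsbopt : ∀ e ∈ E, ∀ N : Fin (n e.1) → Fin (n e.2) → ℝ,
      ((∀ x y, 0 ≤ N x y) ∧ (∀ x, ∑ y, N x y = μ e.1 x) ∧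
        (∀ y, ∑ x, N x y = μ e.2 y)) →
      ∑ x, ∑ y, Msb e.1 e.2 x y *
          Real.log (Msb e.1 e.2 x y / Real.exp (-(C e.1 e.2 x y) / η))
        ≤ ∑ x, ∑ y, N x y * Real.log (N x y / Real.exp (-(C e.1 e.2 x y) / η)))
    (M : ((σ : Fin s) → Fin (n σ)) → ℝ)
    (hMmem : (∀ i, 0 ≤ M i) ∧ ∀ (σ : Fin s) (r : Fin (n σ)),
      ∑ i : (τ : Fin s) → Fin (n τ), (if i σ = r then M i else 0) = μ σ r)
    (hMopt : ∀ N : ((σ : Fin s) → Fin (n σ)) → ℝ,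
      ((∀ i, 0 ≤ N i) ∧ ∀ (σ : Fin s) (r : Fin (n σ)),
        ∑ i : (τ : Fin s) → Fin (n τ), (if i σ = r then N i else 0) = μ σ r) →
      ∑ i, M i * Real.log (M i /
          Real.exp (-(∑ e ∈ E, C e.1 e.2 (i e.1) (i e.2)) / η))
        ≤ ∑ i, N i * Real.log (N i /
          Real.exp (-(∑ e ∈ E, C e.1 e.2 (i e.1) (i e.2)) / η))) :
    ∀ i : (σ : Fin s) → Fin (n σ),
      M i = (∏ e ∈ E, Msb e.1 e.2 (i e.1) (i e.2)) /
        ∏ σ : Fin s, μ σ (i σ) ^ ((E.filter fun e => e.1 = σ ∨ e.2 = σ).card - 1) := by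
  have : Nontrivial (Fin s) := Fin.nontrivial_iff_two_le.2 hs
  have hgibbs : ∀ e ∈ E, ∃ (f : Fin (n e.1) → ℝ) (g : Fin (n e.2) → ℝ), ∀ x y,
      Msb e.1 e.2 x y = exp (-(C e.1 e.2 x y) / η) * exp (f x + g y) := fun e he =>
    IsTransportPlan.exists_potentials_of_isMinOn (hμpos _) (hμpos _) (hμ1 _) (hμ1 _)
      (fun _ _ => exp_pos _) (hMsbmem e he) (isMinOn_iff.2 (hMsbopt e he))
  choose! f g hMsb using hgibbs
  have hK : ∀ i : (σ : Fin s) → Fin (n σ), exp (-(∑ e ∈ E, C e.1 e.2 (i e.1) (i e.2)) / η)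
      = ∏ e ∈ E, exp (-(C e.1 e.2 (i e.1) (i e.2)) / η) := fun i => by
    rw [← exp_sum, ← sum_div, sum_neg_distrib]
  have hMN : M = treeCoupling μ Msb E :=
    eq_treeCoupling_of_isMinOn (q := fun σ₁ σ₂ x y => exp (-(C σ₁ σ₂ x y) / η)) hμpos hμ1 hloop
      horient htree.2 (fun _ _ _ _ => exp_pos _) hMsb (fun e he => (hMsbmem e he).2) hMmem.1
      hMmem.2 (isMinOn_iff.2 fun N hN => by simpa only [relEntropy, hK] using hMopt N hN)
  intro i
  rw [hMN]
  exact treeCoupling_eq_div (fun σ r => (hμpos σ r).ne') hloop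
    (one_le_card_filter_of_connected htree.1) i

/-- The optimal tree-structured MSB coupling is the product of the optimal
edge (bimarginal SB) couplings divided by powers of the vertex marginals. -/
theorem tree_msb_coupling_product_formula
    (s : ℕ) (hs : 2 ≤ s) (n : Fin s → ℕ)
    (μ : (σ : Fin s) → Fin (n σ) → ℝ)
    (hμpos : ∀ σ r, 0 < μ σ r) (hμ1 : ∀ σ, ∑ r, μ σ r = 1)
    (E : Finset (Fin s × Fin s))
    (hloop : ∀ e ∈ E, e.1 ≠ e.2) (horient : ∀ e ∈ E, (e.2, e.1) ∉ E)
    (htree : (SimpleGraph.fromRel (fun a b => (a, b) ∈ E)).Connected ∧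
             (SimpleGraph.fromRel (fun a b => (a, b) ∈ E)).IsAcyclic)
    (C : (σ₁ σ₂ : Fin s) → Fin (n σ₁) → Fin (n σ₂) → ℝ) (η : ℝ) (hη : 0 < η)
    (Msb : (σ₁ σ₂ : Fin s) → Fin (n σ₁) → Fin (n σ₂) → ℝ)
    (hMsbmem : ∀ e ∈ E, (∀ x y, 0 ≤ Msb e.1 e.2 x y) ∧
      (∀ x, ∑ y, Msb e.1 e.2 x y = μ e.1 x) ∧
      (∀ y, ∑ x, Msb e.1 e.2 x y = μ e.2 y))
    (hMsbopt : ∀ e ∈ E, ∀ N : Fin (n e.1) → Fin (n e.2) → ℝ,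
      ((∀ x y, 0 ≤ N x y) ∧ (∀ x, ∑ y, N x y = μ e.1 x) ∧
        (∀ y, ∑ x, N x y = μ e.2 y)) →
      ∑ x, ∑ y, Msb e.1 e.2 x y *
          Real.log (Msb e.1 e.2 x y / Real.exp (-(C e.1 e.2 x y) / η))
        ≤ ∑ x, ∑ y, N x y * Real.log (N x y / Real.exp (-(C e.1 e.2 x y) / η)))
    (M : ((σ : Fin s) → Fin (n σ)) → ℝ)
    (hMmem : (∀ i, 0 ≤ M i) ∧ ∀ (σ : Fin s) (r : Fin (n σ)),
      ∑ i : (τ : Fin s) → Fin (n τ), (if i σ = r then M i else 0) = μ σ r)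
    (hMopt : ∀ N : ((σ : Fin s) → Fin (n σ)) → ℝ,
      ((∀ i, 0 ≤ N i) ∧ ∀ (σ : Fin s) (r : Fin (n σ)),
        ∑ i : (τ : Fin s) → Fin (n τ), (if i σ = r then N i else 0) = μ σ r) →
      ∑ i, M i * Real.log (M i /
          Real.exp (-(∑ e ∈ E, C e.1 e.2 (i e.1) (i e.2)) / η))
        ≤ ∑ i, N i * Real.log (N i /
          Real.exp (-(∑ e ∈ E, C e.1 e.2 (i e.1) (i e.2)) / η))) :
    ∀ i : (σ : Fin s) → Fin (n σ),
      M i = (∏ e ∈ E, Msb e.1 e.2 (i e.1) (i e.2)) /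
        ∏ σ : Fin s, μ σ (i σ) ^ ((E.filter fun e => e.1 = σ ∨ e.2 = σ).card - 1) :=
  tree_msb_coupling_product_formula_general s hs n μ hμpos hμ1 E hloop horient htree C η Msb hMsbmem
    hMsbopt M hMmem hMopt
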